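/- Let x₁ ~ N(0,1) and z ~ N(0,1) be independent, θ* ∈ R^d, b₁* and b₂* real numbers with (b₁*)² + (b₂*)² = ‖θ*‖², and let y = x₁ b₁* + z̄ where z̄ ~ N(0, 1 + (b₂*)²). Then for any t > 0, E[x₁² · tanh(t x₁ y)] ≤ E[x₁² · tanh(t x₁² b₁*)], and consequently E[x₁² tanh(t x₁ y)] ≤ t b₁* E[x₁⁴] = 3 t b₁*. -/

import Mathlib

open Real MeasureTheory ProbabilityTheory Set
open scoped NNReal

/-!
Conditionally on `x₁ = x`, the integrand is `x² tanh(a + c z̄)` with `a = t x² b₁* ≥ 0`, and `z̄` is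
symmetric. Averaging the values at `z̄` and `-z̄` and using `tanh(a + u) + tanh(a - u) ≤ 2 tanh a`
for `a ≥ 0` gives the first inequality. The second follows from `tanh u ≤ u` for `u ≥ 0` and
`E[x₁⁴] = 3`, an instance of `E|x₁|^q = 2^(q/2) Γ((q+1)/2) / √π`.
-/

namespace Real

lemma continuous_tanh : Continuous tanh :=
  (continuous_sinh.div continuous_cosh fun x => (cosh_pos x).ne').congr
    fun x => (tanh_eq_sinh_div_cosh x).symm

lemma abs_tanh_le_one (x : ℝ) : |tanh x| ≤ 1 :=
  abs_le.2 ⟨(neg_one_lt_tanh x).le, (tanh_lt_one x).le⟩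

lemma tanh_eq_one_sub_two_div (x : ℝ) : tanh x = 1 - 2 / (exp (2 * x) + 1) := by
  have h : exp (2 * x) = exp x * exp x := by rw [two_mul, exp_add]
  rw [tanh_eq, exp_neg, h]
  field_simp
  ring

lemma tanh_add_add_tanh_sub_le {a : ℝ} (ha : 0 ≤ a) (u : ℝ) :
    tanh (a + u) + tanh (a - u) ≤ 2 * tanh a := by
  simp only [tanh_eq_one_sub_two_div]
  -- `PQ = R²` and `R ≥ 1`; the claim reduces to `(R - 1)(P + Q - 2R) ≥ 0`.
  set P := exp (2 * (a + u))
  set Q := exp (2 * (a - u))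
  set R := exp (2 * a)
  have hPQ : P * Q = R ^ 2 := by simp only [P, Q, R, ← exp_add, sq]; ring_nf
  have hR : 1 ≤ R := one_le_exp (by positivity)
  have hP : 0 < P := exp_pos _
  have hQ : 0 < Q := exp_pos _
  have hAMGM : 2 * R ≤ P + Q := by nlinarith [sq_nonneg (P - Q)]
  have key : 4 / (R + 1) ≤ 2 / (P + 1) + 2 / (Q + 1) := by
    rw [div_add_div _ _ (by positivity) (by positivity),
      div_le_div_iff₀ (by positivity) (by positivity)]
    nlinarith [mul_nonneg (sub_nonneg.2 hR) (sub_nonneg.2 hAMGM)]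
  have h4 : 4 / (R + 1) = 2 * (2 / (R + 1)) := by ring
  linarith

lemma sinh_le_mul_cosh {x : ℝ} (hx : 0 ≤ x) : sinh x ≤ x * cosh x := by
  have hderiv : ∀ y, HasDerivAt (fun y => y * cosh y - sinh y) (y * sinh y) y := fun y =>
    (((hasDerivAt_id' y).mul (hasDerivAt_cosh y)).sub (hasDerivAt_sinh y)).congr_deriv (by ring)
  have hmono : MonotoneOn (fun y => y * cosh y - sinh y) (Ici 0) := by
    refine monotoneOn_of_deriv_nonneg (convex_Ici 0) ?_ ?_ ?_
    · exact (continuous_id.mul continuous_cosh).sub continuous_sinh |>.continuousOn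
    · exact fun y _ => (hderiv y).differentiableAt.differentiableWithinAt
    · intro y hy
      rw [interior_Ici, mem_Ioi] at hy
      rw [(hderiv y).deriv]
      exact mul_nonneg hy.le (sinh_nonneg_iff.2 hy.le)
  simpa using hmono self_mem_Ici hx hx

lemma tanh_le_self {x : ℝ} (hx : 0 ≤ x) : tanh x ≤ x := by
  rw [tanh_eq_sinh_div_cosh, div_le_iff₀ (cosh_pos x)]
  exact sinh_le_mul_cosh hx

end Real

namespace ProbabilityTheory

lemma integral_abs_rpow_gaussianReal {q : ℝ} (hq : -1 < q) :
    ∫ x, |x| ^ q ∂gaussianReal 0 1 = 2 ^ (q / 2) * Gamma ((q + 1) / 2) / √π := by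
  set f : ℝ → ℝ := fun y => y ^ q * exp (-(1 / 2) * y ^ (2 : ℝ))
  have hpdf : ∀ x, gaussianPDFReal 0 1 x * |x| ^ q = (√(2 * π))⁻¹ * f |x| := fun x => by
    simp only [f, gaussianPDFReal, rpow_two, sq_abs]
    push_cast
    ring_nf
  have h2 : (2 : ℝ) ^ ((q + 1) / 2) = 2 ^ (q / 2) * √2 := by
    rw [sqrt_eq_rpow, ← rpow_add two_pos]
    ring_nf
  rw [integral_gaussianReal_eq_integral_smul one_ne_zero]
  simp only [smul_eq_mul, hpdf]
  rw [integral_const_mul, integral_comp_abs (f := f),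
    integral_rpow_mul_exp_neg_mul_rpow two_pos hq (by norm_num),
    one_div, inv_rpow zero_le_two, ← rpow_neg zero_le_two, neg_div, neg_neg, h2,
    sqrt_mul zero_le_two]
  field_simp

lemma integral_pow_four_gaussianReal : ∫ x, x ^ 4 ∂gaussianReal 0 1 = 3 := by
  have hGamma : Gamma (5 / 2) = 3 / 4 * √π := by
    rw [show (5 / 2 : ℝ) = 1 / 2 + 1 + 1 by norm_num, Gamma_add_one (by norm_num),
      Gamma_add_one (by norm_num), Gamma_one_half_eq]
    ring
  calc ∫ x, x ^ 4 ∂gaussianReal 0 1 = ∫ x, |x| ^ (4 : ℝ) ∂gaussianReal 0 1 := by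
        congr 1 with x
        rw [show (4 : ℝ) = (4 : ℕ) by norm_num, rpow_natCast, Even.pow_abs ⟨2, rfl⟩]
    _ = 3 := by
        rw [integral_abs_rpow_gaussianReal (by norm_num), show ((4 : ℝ) + 1) / 2 = 5 / 2 by norm_num,
          hGamma]
        have hπ : √π ≠ 0 := (sqrt_pos.2 pi_pos).ne'
        field_simp
        norm_num

lemma integrable_pow_gaussianReal (μ : ℝ) (v : ℝ≥0) (n : ℕ) :
    Integrable (fun x => x ^ n) (gaussianReal μ v) :=
  (memLp_id_gaussianReal n).integrable_norm_pow'.mono' (by fun_prop)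
    (ae_of_all _ fun x => by simp)

end ProbabilityTheory

lemma integral_tanh_add_mul_le {ν : Measure ℝ} [IsProbabilityMeasure ν]
    (hν : ν.map (fun z => -z) = ν) {a : ℝ} (ha : 0 ≤ a) (c : ℝ) :
    ∫ z, tanh (a + c * z) ∂ν ≤ tanh a := by
  have hint : ∀ c', Integrable (fun z => tanh (a + c' * z)) ν := fun c' =>
    (integrable_const 1).mono' (continuous_tanh.comp (by fun_prop)).aestronglyMeasurable
      (ae_of_all _ fun z => abs_tanh_le_one _)
  have hreflect : ∫ z, tanh (a + c * z) ∂ν = ∫ z, tanh (a - c * z) ∂ν := by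
    conv_lhs => rw [← hν]
    rw [show (fun z : ℝ => -z) = MeasurableEquiv.neg ℝ from rfl, integral_map_equiv]
    simp_rw [MeasurableEquiv.neg_apply, mul_neg, ← sub_eq_add_neg]
  have hint_sub : Integrable (fun z => tanh (a - c * z)) ν := by
    simpa [sub_eq_add_neg] using hint (-c)
  have hsum : ∫ z, (tanh (a + c * z) + tanh (a - c * z)) ∂ν ≤ ∫ _, 2 * tanh a ∂ν :=
    integral_mono ((hint c).add hint_sub) (integrable_const _)
      fun z => tanh_add_add_tanh_sub_le ha (c * z)
  rw [integral_add (hint c) hint_sub, ← hreflect,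
    integral_const, probReal_univ, one_smul] at hsum
  linarith

lemma MeasureTheory.Integrable.mul_tanh {α : Type*} [MeasurableSpace α] {ρ : Measure α}
    {f g : α → ℝ} (hf : Integrable f ρ) (hg : AEStronglyMeasurable g ρ) :
    Integrable (fun x => f x * tanh (g x)) ρ :=
  hf.mul_bdd (continuous_tanh.comp_aestronglyMeasurable hg)
    (ae_of_all _ fun x => abs_tanh_le_one (g x))

lemma integral_sq_mul_tanh_prod_le {μ ν : Measure ℝ} [SFinite μ] [IsProbabilityMeasure ν]
    (hμ : Integrable (fun x => x ^ 2) μ) (hν : ν.map (fun z => -z) = ν)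
    {t b : ℝ} (ht : 0 ≤ t) (hb : 0 ≤ b) :
    ∫ p : ℝ × ℝ, p.1 ^ 2 * tanh (t * p.1 * (p.1 * b + p.2)) ∂μ.prod ν
      ≤ ∫ x, x ^ 2 * tanh (t * x ^ 2 * b) ∂μ := by
  have hint := (hμ.comp_fst ν).mul_tanh (g := fun p : ℝ × ℝ => t * p.1 * (p.1 * b + p.2))
    (by fun_prop)
  rw [integral_prod _ hint]
  refine integral_mono hint.integral_prod_left (hμ.mul_tanh (by fun_prop)) fun x => ?_
  have harg : ∀ z, t * x * (x * b + z) = t * x ^ 2 * b + t * x * z := fun z => by ring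
  simp only [harg, integral_const_mul]
  exact mul_le_mul_of_nonneg_left (integral_tanh_add_mul_le hν (by positivity) _) (sq_nonneg x)

lemma integral_sq_mul_tanh_le {μ : Measure ℝ} (h2 : Integrable (fun x => x ^ 2) μ)
    (h4 : Integrable (fun x => x ^ 4) μ) {t b : ℝ} (ht : 0 ≤ t) (hb : 0 ≤ b) :
    ∫ x, x ^ 2 * tanh (t * x ^ 2 * b) ∂μ ≤ t * b * ∫ x, x ^ 4 ∂μ := by
  rw [← integral_const_mul]
  refine integral_mono (h2.mul_tanh (by fun_prop)) (h4.const_mul _) fun x => ?_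
  calc x ^ 2 * tanh (t * x ^ 2 * b) ≤ x ^ 2 * (t * x ^ 2 * b) :=
        mul_le_mul_of_nonneg_left (tanh_le_self (by positivity)) (sq_nonneg x)
    _ = t * b * x ^ 4 := by ring

theorem second_coordinate_bound_general
    (b1 b2 t : ℝ) (hb1 : 0 ≤ b1) (ht : 0 < t) :
    (∫ p : ℝ × ℝ, p.1 ^ 2 * Real.tanh (t * p.1 * (p.1 * b1 + p.2))
        ∂((gaussianReal 0 1).prod (gaussianReal 0 (Real.toNNReal (1 + b2 ^ 2)))))
      ≤ (∫ p : ℝ × ℝ, p.1 ^ 2 * Real.tanh (t * p.1 ^ 2 * b1)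
        ∂((gaussianReal 0 1).prod (gaussianReal 0 (Real.toNNReal (1 + b2 ^ 2))))) ∧
    (∫ p : ℝ × ℝ, p.1 ^ 2 * Real.tanh (t * p.1 * (p.1 * b1 + p.2))
        ∂((gaussianReal 0 1).prod (gaussianReal 0 (Real.toNNReal (1 + b2 ^ 2)))))
      ≤ 3 * t * b1 := by
  have hν : (gaussianReal 0 (1 + b2 ^ 2).toNNReal).map (fun z => -z)
      = gaussianReal 0 (1 + b2 ^ 2).toNNReal := by
    rw [gaussianReal_map_neg, neg_zero]
  have hfst : ∫ p : ℝ × ℝ, p.1 ^ 2 * tanh (t * p.1 ^ 2 * b1)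
        ∂(gaussianReal 0 1).prod (gaussianReal 0 (1 + b2 ^ 2).toNNReal)
      = ∫ x, x ^ 2 * tanh (t * x ^ 2 * b1) ∂gaussianReal 0 1 := by
    simp [integral_fun_fst (fun x : ℝ => x ^ 2 * tanh (t * x ^ 2 * b1))]
  have first := integral_sq_mul_tanh_prod_le (integrable_pow_gaussianReal 0 1 2) hν ht.le hb1
  rw [hfst]
  refine ⟨first, first.trans ?_⟩
  calc ∫ x, x ^ 2 * tanh (t * x ^ 2 * b1) ∂gaussianReal 0 1
      ≤ t * b1 * ∫ x, x ^ 4 ∂gaussianReal 0 1 :=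
        integral_sq_mul_tanh_le (integrable_pow_gaussianReal 0 1 2)
          (integrable_pow_gaussianReal 0 1 4) ht.le hb1
    _ = 3 * t * b1 := by rw [integral_pow_four_gaussianReal]; ring

/-- With `x₁ ~ N(0,1)` and `z̄ ~ N(0, 1 + (b₂*)²)` independent, `y = x₁ b₁* + z̄`,
`(b₁*)² + (b₂*)² = ‖θ*‖²`, `b₁* ≥ 0`, `t > 0`:
`E[x₁² tanh(t x₁ y)] ≤ E[x₁² tanh(t x₁² b₁*)]` and `E[x₁² tanh(t x₁ y)] ≤ 3 t b₁*`. -/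
theorem second_coordinate_bound {d : ℕ} (θs : EuclideanSpace ℝ (Fin d))
    (b1 b2 t : ℝ) (hb : b1 ^ 2 + b2 ^ 2 = ‖θs‖ ^ 2) (hb1 : 0 ≤ b1) (ht : 0 < t) :
    (∫ p : ℝ × ℝ, p.1 ^ 2 * Real.tanh (t * p.1 * (p.1 * b1 + p.2))
        ∂((gaussianReal 0 1).prod (gaussianReal 0 (Real.toNNReal (1 + b2 ^ 2)))))
      ≤ (∫ p : ℝ × ℝ, p.1 ^ 2 * Real.tanh (t * p.1 ^ 2 * b1)
        ∂((gaussianReal 0 1).prod (gaussianReal 0 (Real.toNNReal (1 + b2 ^ 2))))) ∧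
    (∫ p : ℝ × ℝ, p.1 ^ 2 * Real.tanh (t * p.1 * (p.1 * b1 + p.2))
        ∂((gaussianReal 0 1).prod (gaussianReal 0 (Real.toNNReal (1 + b2 ^ 2)))))
      ≤ 3 * t * b1 :=
  second_coordinate_bound_general b1 b2 t hb1 ht
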